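/- arXiv:2504.02804 — 4 statements merged into one kernel-verified Lean document; each statement's English description precedes it below -/
import Mathlib

section
/- There is an absolute constant C > 0 with the following property. Let δ ∈ (0, 1), ε ∈ (0, δ], T > 0, and let S ⊆ ℕ be finite and nonempty; set λ_min := min_{i∈S} λ_i, λ_max := max_{i∈S} λ_i, and x⁺ := max(x, 0) for x ∈ ℝ. Let q : [0, T] → H be continuous and let h : [0, T] → H be a continuous mild solution of ∂_τh = Lh + q such that ‖h_τ‖_{H_W} < ∞ and ‖q_τ‖ ≤ ε·‖h_τ‖_{H_W} for all τ ∈ [0, T]. Then τ ↦ ‖P_S h_τ‖²_{H_W} is differentiable on [0, T] and for all τ ∈ [0, T]: (i) d/dτ ( e^{−2[(1+δ)λ_min − δλ_min⁺]τ}·‖P_S h_τ‖²_{H_W} ) ≥ −C·ε·e^{−2[(1+δ)λ_min − δλ_min⁺]τ}·‖h_τ‖²_{H_W}, and (ii) d/dτ ( e^{−2[(1−δ)λ_max + δλ_max⁺]τ}·‖P_S h_τ‖²_{H_W} ) ≤ C·ε·e^{−2[(1−δ)λ_max + δλ_max⁺]τ}·‖h_τ‖²_{H_W}. -/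
open Set Filter

noncomputable section

/-- `X` is a mild solution of `∂_τ X = L X + F` on `I`, where `L` is the diagonal
operator determined by `L (Y i) = lam i • Y i`. -/
def IsMildSolution {H : Type*} [NormedAddCommGroup H] [InnerProductSpace ℝ H]
    (Y : HilbertBasis ℕ ℝ H) (lam : ℕ → ℝ) (I : Set ℝ) (X F : ℝ → H) : Prop :=
  ∀ i : ℕ, ∀ τ ∈ I,
    HasDerivWithinAt (fun t => (inner ℝ (X t) (Y i) : ℝ))
      (lam i * (inner ℝ (X τ) (Y i) : ℝ) + (inner ℝ (F τ) (Y i) : ℝ)) I τ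

/-- The squared weighted norm `‖h‖²_{H_W} = Σ_i (1 + λ_i⁻) ⟨h, Y_i⟩²`. -/
def HWsq {H : Type*} [NormedAddCommGroup H] [InnerProductSpace ℝ H]
    (Y : HilbertBasis ℕ ℝ H) (lam : ℕ → ℝ) (h : H) : ℝ :=
  ∑' i : ℕ, (1 + max (-(lam i)) 0) * (inner ℝ h (Y i) : ℝ) ^ 2

/-- Finiteness of the weighted norm `‖h‖_{H_W}`. -/
def HWfin {H : Type*} [NormedAddCommGroup H] [InnerProductSpace ℝ H]
    (Y : HilbertBasis ℕ ℝ H) (lam : ℕ → ℝ) (h : H) : Prop :=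
  Summable fun i : ℕ => (1 + max (-(lam i)) 0) * (inner ℝ h (Y i) : ℝ) ^ 2

/-- The orthogonal projection onto the closed span of `{Y i : i ∈ S}`. -/
def proj {H : Type*} [NormedAddCommGroup H] [InnerProductSpace ℝ H]
    (Y : HilbertBasis ℕ ℝ H) (S : Set ℕ) (h : H) : H :=
  ∑' i : ℕ, S.indicator (fun j => (inner ℝ h (Y j) : ℝ) • (Y j : H)) i

/-! ### Auxiliary lemmas -/

section Aux

set_option linter.unusedSectionVars false

variable {H : Type*} [NormedAddCommGroup H] [InnerProductSpace ℝ H] [CompleteSpace H]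
  (Y : HilbertBasis ℕ ℝ H) (lam : ℕ → ℝ)

lemma HWsq_eq (x : H) :
    HWsq Y lam x = ∑' i : ℕ, (1 + max (-(lam i)) 0) * (inner ℝ x (Y i) : ℝ) ^ 2 := rfl

lemma HWfin_summable {x : H} (hx : HWfin Y lam x) :
    Summable fun i : ℕ => (1 + max (-(lam i)) 0) * (inner ℝ x (Y i) : ℝ) ^ 2 := hx

lemma proj_finset (S : Finset ℕ) (x : H) :
    proj Y (↑S) x = ∑ i ∈ S, (inner ℝ x (Y i) : ℝ) • (Y i : H) := by
  rw [proj, tsum_eq_sum (s := S)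
    (fun b hb => Set.indicator_of_notMem (by simpa using hb) _)]
  exact Finset.sum_congr rfl fun i hi => Set.indicator_of_mem (by simpa using hi) _

lemma inner_proj (S : Finset ℕ) (x : H) (j : ℕ) :
    (inner ℝ (proj Y (↑S) x) (Y j) : ℝ) = if j ∈ S then (inner ℝ x (Y j) : ℝ) else 0 := by
  classical
  rw [proj_finset, sum_inner]
  have horth := orthonormal_iff_ite.mp Y.orthonormal
  calc ∑ i ∈ S, (inner ℝ ((inner ℝ x (Y i) : ℝ) • (Y i : H)) (Y j) : ℝ)
      = ∑ i ∈ S, if i = j then (inner ℝ x (Y i) : ℝ) else 0 := by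
        refine Finset.sum_congr rfl fun i hi => ?_
        rw [real_inner_smul_left, horth i j]
        split <;> simp
    _ = if j ∈ S then (inner ℝ x (Y j) : ℝ) else 0 := by
        rw [Finset.sum_ite_eq' S j (fun i => (inner ℝ x (Y i) : ℝ))]

lemma HWsq_proj (S : Finset ℕ) (x : H) :
    HWsq Y lam (proj Y (↑S) x)
      = ∑ i ∈ S, (1 + max (-(lam i)) 0) * (inner ℝ x (Y i) : ℝ) ^ 2 := by
  rw [HWsq, tsum_eq_sum (s := S) (fun b hb => by
    rw [inner_proj, if_neg (by simpa using hb)]; ring)]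
  exact Finset.sum_congr rfl fun i hi => by rw [inner_proj, if_pos (by simpa using hi)]

lemma bessel (S : Finset ℕ) (x : H) :
    ∑ i ∈ S, (inner ℝ x (Y i) : ℝ) ^ 2 ≤ ‖x‖ ^ 2 := by
  have hb := Y.orthonormal.sum_inner_products_le (s := S) x
  simpa [Real.norm_eq_abs, sq_abs, real_inner_comm] using hb

lemma hasDeriv_F (S : Finset ℕ) (h q : ℝ → H) (T : ℝ)
    (hmild : IsMildSolution Y lam (Icc 0 T) h q) {τ : ℝ} (hτ : τ ∈ Icc (0:ℝ) T) :
    HasDerivWithinAt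
      (fun t => ∑ i ∈ S, (1 + max (-(lam i)) 0) * (inner ℝ (h t) (Y i) : ℝ) ^ 2)
      (∑ i ∈ S, (1 + max (-(lam i)) 0) *
        (2 * (inner ℝ (h τ) (Y i) : ℝ) *
          (lam i * (inner ℝ (h τ) (Y i) : ℝ) + (inner ℝ (q τ) (Y i) : ℝ))))
      (Icc 0 T) τ := by
  refine HasDerivWithinAt.fun_sum fun i _ => ?_
  have h2 := ((hmild i τ hτ).fun_pow 2).const_mul (1 + max (-(lam i)) 0)
  refine h2.congr_deriv ?_
  push_cast
  ring

lemma hasDeriv_expF (S : Finset ℕ) (h q : ℝ → H) (T c : ℝ)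
    (hmild : IsMildSolution Y lam (Icc 0 T) h q) {τ : ℝ} (hτ : τ ∈ Icc (0:ℝ) T) :
    HasDerivWithinAt
      (fun t => Real.exp (c * t) *
        ∑ i ∈ S, (1 + max (-(lam i)) 0) * (inner ℝ (h t) (Y i) : ℝ) ^ 2)
      (Real.exp (c * τ) * c *
          (∑ i ∈ S, (1 + max (-(lam i)) 0) * (inner ℝ (h τ) (Y i) : ℝ) ^ 2)
        + Real.exp (c * τ) *
          (∑ i ∈ S, (1 + max (-(lam i)) 0) *
            (2 * (inner ℝ (h τ) (Y i) : ℝ) *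
              (lam i * (inner ℝ (h τ) (Y i) : ℝ) + (inner ℝ (q τ) (Y i) : ℝ)))))
      (Icc 0 T) τ := by
  have hc : HasDerivAt (fun t : ℝ => c * t) c τ := by
    simpa using (hasDerivAt_id τ).const_mul c
  exact (hc.exp.hasDerivWithinAt).mul (hasDeriv_F Y lam S h q T hmild hτ)

end Aux

/-! ### Scalar lemmas -/

lemma mode_lower (ε w l t c A Qi : ℝ) (hε0 : 0 < ε) (hw0 : 0 ≤ w) (ht0 : 0 < t)
    (hεw : ε * w ≤ t) (hcoef : 0 ≤ 2 * l + c - t + ε) :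
    -(ε ^ 2 * (w * A ^ 2)) - Qi ^ 2 ≤ ε * (c * (w * A ^ 2) + w * (2 * A * (l * A + Qi))) := by
  have key : 2 * t * |A * Qi| ≤ t ^ 2 * A ^ 2 + Qi ^ 2 := by
    nlinarith [sq_nonneg (t * |A| - |Qi|), sq_abs A, sq_abs Qi, abs_mul A Qi,
      abs_nonneg A, abs_nonneg Qi]
  have hstep : 2 * (ε * w) * |A * Qi| ≤ ε * t * w * A ^ 2 + Qi ^ 2 := by
    have h1 : (2 * (ε * w) * |A * Qi|) * t ≤ (ε * w) * (t ^ 2 * A ^ 2 + Qi ^ 2) := by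
      nlinarith [mul_le_mul_of_nonneg_left key (show (0:ℝ) ≤ ε * w by positivity)]
    have h2 : (ε * w) * (t ^ 2 * A ^ 2 + Qi ^ 2) ≤ (ε * t * w * A ^ 2 + Qi ^ 2) * t := by
      nlinarith [mul_le_mul_of_nonneg_right hεw (sq_nonneg Qi)]
    exact le_of_mul_le_mul_right (h1.trans h2) ht0
  have habs := mul_le_mul_of_nonneg_left (neg_abs_le (A * Qi))
    (show (0:ℝ) ≤ 2 * (ε * w) by positivity)
  nlinarith [hstep, habs,
    mul_nonneg (mul_nonneg (mul_nonneg hε0.le hw0) (sq_nonneg A)) hcoef]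

lemma mode_upper (ε w l t c A Qi : ℝ) (hε0 : 0 < ε) (hw0 : 0 ≤ w) (ht0 : 0 < t)
    (hεw : ε * w ≤ t) (hcoef : 2 * l + c + t ≤ ε) :
    ε * (c * (w * A ^ 2) + w * (2 * A * (l * A + Qi))) ≤ ε ^ 2 * (w * A ^ 2) + Qi ^ 2 := by
  have key : 2 * t * |A * Qi| ≤ t ^ 2 * A ^ 2 + Qi ^ 2 := by
    nlinarith [sq_nonneg (t * |A| - |Qi|), sq_abs A, sq_abs Qi, abs_mul A Qi,
      abs_nonneg A, abs_nonneg Qi]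
  have hstep : 2 * (ε * w) * |A * Qi| ≤ ε * t * w * A ^ 2 + Qi ^ 2 := by
    have h1 : (2 * (ε * w) * |A * Qi|) * t ≤ (ε * w) * (t ^ 2 * A ^ 2 + Qi ^ 2) := by
      nlinarith [mul_le_mul_of_nonneg_left key (show (0:ℝ) ≤ ε * w by positivity)]
    have h2 : (ε * w) * (t ^ 2 * A ^ 2 + Qi ^ 2) ≤ (ε * t * w * A ^ 2 + Qi ^ 2) * t := by
      nlinarith [mul_le_mul_of_nonneg_right hεw (sq_nonneg Qi)]
    exact le_of_mul_le_mul_right (h1.trans h2) ht0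
  have habs := mul_le_mul_of_nonneg_left (le_abs_self (A * Qi))
    (show (0:ℝ) ≤ 2 * (ε * w) by positivity)
  nlinarith [hstep, habs,
    mul_nonneg (mul_nonneg (mul_nonneg hε0.le hw0) (sq_nonneg A))
      (show (0:ℝ) ≤ ε - (2 * l + c + t) by linarith)]

lemma max_zero_eq_add (x : ℝ) : max x 0 = x + max (-x) 0 := by
  rcases le_total x 0 with hx | hx
  · rw [max_eq_right hx, max_eq_left (neg_nonneg.2 hx)]; ring
  · rw [max_eq_left hx, max_eq_right (neg_nonpos.2 hx)]; ring

lemma sum_bound_lower (S : Finset ℕ) (ε W : ℝ) (φ ψ G : ℕ → ℝ) (hε0 : 0 < ε) (hW0 : 0 ≤ W)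
    (hF : ∑ i ∈ S, φ i ≤ W) (hQ : ∑ i ∈ S, ψ i ≤ ε ^ 2 * W)
    (hmode : ∀ i ∈ S, -(ε ^ 2 * φ i) - ψ i ≤ ε * G i) :
    -(4 * ε * W) ≤ ∑ i ∈ S, G i := by
  have h1 : ∑ i ∈ S, (-(ε ^ 2 * φ i) - ψ i) ≤ ∑ i ∈ S, ε * G i := Finset.sum_le_sum hmode
  rw [Finset.sum_sub_distrib, Finset.sum_neg_distrib, ← Finset.mul_sum, ← Finset.mul_sum] at h1
  have h2 : ε * (-(4 * ε * W)) ≤ ε * ∑ i ∈ S, G i := by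
    nlinarith [mul_le_mul_of_nonneg_left hF (sq_nonneg ε), mul_nonneg (sq_nonneg ε) hW0]
  exact (mul_le_mul_iff_right₀ hε0).mp h2

lemma sum_bound_upper (S : Finset ℕ) (ε W : ℝ) (φ ψ G : ℕ → ℝ) (hε0 : 0 < ε) (hW0 : 0 ≤ W)
    (hF : ∑ i ∈ S, φ i ≤ W) (hQ : ∑ i ∈ S, ψ i ≤ ε ^ 2 * W)
    (hmode : ∀ i ∈ S, ε * G i ≤ ε ^ 2 * φ i + ψ i) :
    ∑ i ∈ S, G i ≤ 4 * ε * W := by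
  have h1 : ∑ i ∈ S, ε * G i ≤ ∑ i ∈ S, (ε ^ 2 * φ i + ψ i) := Finset.sum_le_sum hmode
  rw [Finset.sum_add_distrib, ← Finset.mul_sum, ← Finset.mul_sum] at h1
  have h2 : ε * ∑ i ∈ S, G i ≤ ε * (4 * ε * W) := by
    nlinarith [mul_le_mul_of_nonneg_left hF (sq_nonneg ε), mul_nonneg (sq_nonneg ε) hW0]
  exact (mul_le_mul_iff_right₀ hε0).mp h2


/-- Differential inequalities for the weighted norms of spectral projections of a
perturbation dominated by a small quadratic error: there is an absolute constant
`C > 0` such that for any finite spectral window `S`, the `H_W`-norm squared of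
`P_S h_τ`, weighted by the appropriate exponential factors built from the extreme
eigenvalues of `S`, is almost monotone (i), resp. almost decreasing (ii). -/
theorem spectral_projection_differential_inequalities :
    ∃ C : ℝ, 0 < C ∧
      ∀ (H : Type) [NormedAddCommGroup H] [InnerProductSpace ℝ H] [CompleteSpace H],
      ∀ (Y : HilbertBasis ℕ ℝ H) (lam : ℕ → ℝ),
        Antitone lam → Tendsto lam atTop atBot →
        ∀ δ ε T : ℝ, 0 < δ → δ < 1 → 0 < ε → ε ≤ δ → 0 < T →
        ∀ (S : Finset ℕ) (hS : S.Nonempty),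
        ∀ h q : ℝ → H,
          ContinuousOn h (Icc 0 T) → ContinuousOn q (Icc 0 T) →
          IsMildSolution Y lam (Icc 0 T) h q →
          (∀ τ ∈ Icc (0:ℝ) T, HWfin Y lam (h τ)) →
          (∀ τ ∈ Icc (0:ℝ) T, ‖q τ‖ ≤ ε * Real.sqrt (HWsq Y lam (h τ))) →
          ∃ D₀ D₁ D₂ : ℝ → ℝ, ∀ τ ∈ Icc (0:ℝ) T,
            HasDerivWithinAt (fun t => HWsq Y lam (proj Y (↑S) (h t)))
              (D₀ τ) (Icc 0 T) τ ∧
            HasDerivWithinAt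
              (fun t => Real.exp
                  (-2 * ((1 + δ) * S.inf' hS lam - δ * max (S.inf' hS lam) 0) * t)
                * HWsq Y lam (proj Y (↑S) (h t))) (D₁ τ) (Icc 0 T) τ ∧
            HasDerivWithinAt
              (fun t => Real.exp
                  (-2 * ((1 - δ) * S.sup' hS lam + δ * max (S.sup' hS lam) 0) * t)
                * HWsq Y lam (proj Y (↑S) (h t))) (D₂ τ) (Icc 0 T) τ ∧
            -C * ε * Real.exp
                (-2 * ((1 + δ) * S.inf' hS lam - δ * max (S.inf' hS lam) 0) * τ)
              * HWsq Y lam (h τ) ≤ D₁ τ ∧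
            D₂ τ ≤ C * ε * Real.exp
                (-2 * ((1 - δ) * S.sup' hS lam + δ * max (S.sup' hS lam) 0) * τ)
              * HWsq Y lam (h τ) := by
  classical
  refine ⟨4, by norm_num, ?_⟩
  intro H _ _ _ Y lam _ _ δ ε T hδ0 hδ1 hε0 hεδ hT S hS h q _ _ hmild hfin hq
  simp only [HWsq_proj]
  set Λ := S.inf' hS lam with hΛdef
  set M := S.sup' hS lam with hMdef
  set c₁ := -2 * ((1 + δ) * Λ - δ * max Λ 0) with hc₁def
  set c₂ := -2 * ((1 - δ) * M + δ * max M 0) with hc₂def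
  refine ⟨fun τ => ∑ i ∈ S, (1 + max (-(lam i)) 0) *
      (2 * (inner ℝ (h τ) (Y i) : ℝ) *
        (lam i * (inner ℝ (h τ) (Y i) : ℝ) + (inner ℝ (q τ) (Y i) : ℝ))),
    fun τ => Real.exp (c₁ * τ) * c₁ *
        (∑ i ∈ S, (1 + max (-(lam i)) 0) * (inner ℝ (h τ) (Y i) : ℝ) ^ 2)
      + Real.exp (c₁ * τ) * ∑ i ∈ S, (1 + max (-(lam i)) 0) *
        (2 * (inner ℝ (h τ) (Y i) : ℝ) *
          (lam i * (inner ℝ (h τ) (Y i) : ℝ) + (inner ℝ (q τ) (Y i) : ℝ))),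
    fun τ => Real.exp (c₂ * τ) * c₂ *
        (∑ i ∈ S, (1 + max (-(lam i)) 0) * (inner ℝ (h τ) (Y i) : ℝ) ^ 2)
      + Real.exp (c₂ * τ) * ∑ i ∈ S, (1 + max (-(lam i)) 0) *
        (2 * (inner ℝ (h τ) (Y i) : ℝ) *
          (lam i * (inner ℝ (h τ) (Y i) : ℝ) + (inner ℝ (q τ) (Y i) : ℝ))), ?_⟩
  intro τ hτ
  have hW0 : 0 ≤ HWsq Y lam (h τ) := tsum_nonneg fun i => by positivity
  have hFW : (∑ i ∈ S, (1 + max (-(lam i)) 0) * (inner ℝ (h τ) (Y i) : ℝ) ^ 2)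
      ≤ HWsq Y lam (h τ) := by
    rw [HWsq_eq]
    exact Summable.sum_le_tsum S (fun i _ => by positivity) (HWfin_summable Y lam (hfin τ hτ))
  have hQW : ∑ i ∈ S, (inner ℝ (q τ) (Y i) : ℝ) ^ 2 ≤ ε ^ 2 * HWsq Y lam (h τ) := by
    have hb := bessel Y S (q τ)
    have h2 : ‖q τ‖ ^ 2 ≤ (ε * Real.sqrt (HWsq Y lam (h τ))) ^ 2 :=
      pow_le_pow_left₀ (norm_nonneg _) (hq τ hτ) 2
    rw [mul_pow, Real.sq_sqrt hW0] at h2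
    linarith
  have hL0 : (0:ℝ) ≤ max (-Λ) 0 := le_max_right _ _
  have hK0 : (0:ℝ) ≤ max (-M) 0 := le_max_right _ _
  have hmaxΛ : max Λ 0 = Λ + max (-Λ) 0 := max_zero_eq_add Λ
  have hmaxM : max M 0 = M + max (-M) 0 := max_zero_eq_add M
  refine ⟨hasDeriv_F Y lam S h q T hmild hτ,
    hasDeriv_expF Y lam S h q T c₁ hmild hτ,
    hasDeriv_expF Y lam S h q T c₂ hmild hτ, ?_, ?_⟩
  · -- lower bound
    have key : -(4 * ε * HWsq Y lam (h τ)) ≤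
        c₁ * (∑ i ∈ S, (1 + max (-(lam i)) 0) * (inner ℝ (h τ) (Y i) : ℝ) ^ 2)
          + ∑ i ∈ S, (1 + max (-(lam i)) 0) *
            (2 * (inner ℝ (h τ) (Y i) : ℝ) *
              (lam i * (inner ℝ (h τ) (Y i) : ℝ) + (inner ℝ (q τ) (Y i) : ℝ))) := by
      have hsb := sum_bound_lower S ε (HWsq Y lam (h τ))
        (fun i => (1 + max (-(lam i)) 0) * (inner ℝ (h τ) (Y i) : ℝ) ^ 2)
        (fun i => (inner ℝ (q τ) (Y i) : ℝ) ^ 2)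
        (fun i => c₁ * ((1 + max (-(lam i)) 0) * (inner ℝ (h τ) (Y i) : ℝ) ^ 2)
          + (1 + max (-(lam i)) 0) *
            (2 * (inner ℝ (h τ) (Y i) : ℝ) *
              (lam i * (inner ℝ (h τ) (Y i) : ℝ) + (inner ℝ (q τ) (Y i) : ℝ))))
        hε0 hW0 hFW hQW ?_
      · rw [Finset.sum_add_distrib, ← Finset.mul_sum] at hsb
        exact hsb
      · intro i hi
        have hli : Λ ≤ lam i := Finset.inf'_le lam hi
        refine mode_lower ε _ (lam i) (ε + δ * max (-Λ) 0) c₁ _ _ hε0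
          (by positivity) (by positivity) ?_ ?_
        · have hm : max (-(lam i)) 0 ≤ max (-Λ) 0 := max_le_max (neg_le_neg hli) le_rfl
          nlinarith [mul_le_mul_of_nonneg_left hm hε0.le,
            mul_le_mul_of_nonneg_right hεδ hL0]
        · rw [hc₁def, hmaxΛ]
          nlinarith [mul_nonneg hδ0.le hL0]
    have hmul := mul_le_mul_of_nonneg_left key (Real.exp_pos (c₁ * τ)).le
    beta_reduce
    nlinarith [hmul]
  · -- upper bound
    have key : c₂ * (∑ i ∈ S, (1 + max (-(lam i)) 0) * (inner ℝ (h τ) (Y i) : ℝ) ^ 2)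
          + ∑ i ∈ S, (1 + max (-(lam i)) 0) *
            (2 * (inner ℝ (h τ) (Y i) : ℝ) *
              (lam i * (inner ℝ (h τ) (Y i) : ℝ) + (inner ℝ (q τ) (Y i) : ℝ)))
        ≤ 4 * ε * HWsq Y lam (h τ) := by
      have hsb := sum_bound_upper S ε (HWsq Y lam (h τ))
        (fun i => (1 + max (-(lam i)) 0) * (inner ℝ (h τ) (Y i) : ℝ) ^ 2)
        (fun i => (inner ℝ (q τ) (Y i) : ℝ) ^ 2)
        (fun i => c₂ * ((1 + max (-(lam i)) 0) * (inner ℝ (h τ) (Y i) : ℝ) ^ 2)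
          + (1 + max (-(lam i)) 0) *
            (2 * (inner ℝ (h τ) (Y i) : ℝ) *
              (lam i * (inner ℝ (h τ) (Y i) : ℝ) + (inner ℝ (q τ) (Y i) : ℝ))))
        hε0 hW0 hFW hQW ?_
      · rw [Finset.sum_add_distrib, ← Finset.mul_sum] at hsb
        exact hsb
      · intro i hi
        have hli : lam i ≤ M := Finset.le_sup' lam hi
        refine mode_upper ε _ (lam i) (ε + δ * max (-M) 0 + (M - lam i)) c₂ _ _ hε0
          (by positivity) ?_ ?_ ?_
        · linarith [mul_nonneg hδ0.le hK0]
        · have hm : max (-(lam i)) 0 ≤ max (-M) 0 + (M - lam i) := by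
            apply max_le
            · linarith [le_max_left (-M) (0:ℝ)]
            · linarith [hK0]
          nlinarith [mul_le_mul_of_nonneg_left hm hε0.le,
            mul_le_mul_of_nonneg_right hεδ hK0,
            mul_le_mul_of_nonneg_right (show ε ≤ 1 by linarith)
              (sub_nonneg.2 hli)]
        · rw [hc₂def, hmaxM]
          nlinarith [mul_nonneg hδ0.le hK0]
    have hmul := mul_le_mul_of_nonneg_left key (Real.exp_pos (c₂ * τ)).le
    beta_reduce
    nlinarith [hmul]

end
end

section
/- For every δ ∈ (0, 1), T > 0, C₀ ≥ 1, A ≥ 1 and p, q, r ∈ ℝ there exists ε̄ > 0, depending only on δ, T, C₀, A, p, q, r, such that the following holds for every ε ∈ (0, ε̄]. Let u, v, W : [0, T] → [0, ∞) be differentiable and satisfy, for all τ ∈ [0, T]: (i) d/dτ ( e^{−pτ}·u(τ) ) ≥ −ε·e^{−pτ}·W(τ); (ii) d/dτ ( e^{−qτ}·W(τ) ) ≤ (−2δ + ε)·e^{−qτ}·W(τ); (iii) d/dτ ( e^{−rτ}·v(τ) ) ≤ ε·e^{−rτ}·W(τ); and (iv) W(0) ≤ C₀·u(0) and v(0) ≤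 A·u(0). Then for all τ ∈ [0, T] one has W(τ) ≤ C₀·e^{(q−p)τ}·u(τ) and v(τ) ≤ A·e^{(r−p+2δ)τ}·u(τ). -/
open Set Filter

lemma hda_expMul (c x : ℝ) : HasDerivAt (fun t => Real.exp (c * t)) (c * Real.exp (c * x)) x := by
  exact ((Real.hasDerivAt_exp (c * x)).comp x ((hasDerivAt_id x).const_mul c)).congr_deriv (by ring)

/-- If `f` is continuous on `[0,T]`, differentiable on `(0,T)`, and `f' ≤ K` there, then
`f τ ≤ f 0 + K τ` on `[0,T]`. -/
lemma le_lin_of_deriv_le {T K : ℝ} {f : ℝ → ℝ}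
    (hf : ContinuousOn f (Icc 0 T))
    (hf' : DifferentiableOn ℝ f (Ioo 0 T))
    (hb : ∀ x ∈ Ioo (0:ℝ) T, deriv f x ≤ K) :
    ∀ τ ∈ Icc (0:ℝ) T, f τ ≤ f 0 + K * τ := by
  intro τ hτ
  set F := fun t => f t - K * t with hF
  have hders : ∀ x ∈ Ioo (0:ℝ) T, HasDerivAt F (deriv f x - K) x := by
    intro x hx
    have hfd : HasDerivAt f (deriv f x) x :=
      ((hf' x hx).differentiableAt (isOpen_Ioo.mem_nhds hx)).hasDerivAt
    exact (hfd.sub ((hasDerivAt_id x).const_mul K)).congr_deriv (by ring)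
  have hanti : AntitoneOn F (Icc 0 T) := by
    apply antitoneOn_of_deriv_nonpos (convex_Icc 0 T)
    · exact hf.sub ((continuous_const.mul continuous_id).continuousOn)
    · rw [interior_Icc]
      exact fun x hx => ((hders x hx).differentiableAt).differentiableWithinAt
    · rw [interior_Icc]
      intro x hx
      rw [(hders x hx).deriv]
      linarith [hb x hx]
  have h0 : (0:ℝ) ∈ Icc (0:ℝ) T := ⟨le_rfl, hτ.1.trans hτ.2⟩
  have h := hanti h0 hτ hτ.1
  simp only [hF, mul_zero, sub_zero] at h
  linarith

set_option maxHeartbeats 1000000 in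
/-- Scalar comparison lemma: if `u, v, W : [0,T] → [0,∞)` are differentiable and the
exponentially weighted quantities `e^{-pτ}u`, `e^{-qτ}W`, `e^{-rτ}v` satisfy the
differential inequalities (i)–(iii), and `W(0) ≤ C₀ u(0)`, `v(0) ≤ A u(0)`, then
the dominance of `u` persists at the linear relative rates. The threshold `ε̄`
depends only on `δ, T, C₀, A, p, q, r`. -/
theorem scalar_dominance_persistence (δ T C₀ A p q r : ℝ)
    (hδ0 : 0 < δ) (hδ1 : δ < 1) (hT : 0 < T) (hC₀ : 1 ≤ C₀) (hA : 1 ≤ A) :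
    ∃ εbar : ℝ, 0 < εbar ∧
      ∀ ε : ℝ, 0 < ε → ε ≤ εbar →
      ∀ u v W : ℝ → ℝ,
        DifferentiableOn ℝ u (Icc 0 T) →
        DifferentiableOn ℝ v (Icc 0 T) →
        DifferentiableOn ℝ W (Icc 0 T) →
        (∀ τ ∈ Icc (0:ℝ) T, 0 ≤ u τ ∧ 0 ≤ v τ ∧ 0 ≤ W τ) →
        (∀ τ ∈ Icc (0:ℝ) T,
          -ε * Real.exp (-p * τ) * W τ ≤
            derivWithin (fun t => Real.exp (-p * t) * u t) (Icc 0 T) τ) →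
        (∀ τ ∈ Icc (0:ℝ) T,
          derivWithin (fun t => Real.exp (-q * t) * W t) (Icc 0 T) τ ≤
            (-2 * δ + ε) * Real.exp (-q * τ) * W τ) →
        (∀ τ ∈ Icc (0:ℝ) T,
          derivWithin (fun t => Real.exp (-r * t) * v t) (Icc 0 T) τ ≤
            ε * Real.exp (-r * τ) * W τ) →
        W 0 ≤ C₀ * u 0 →
        v 0 ≤ A * u 0 →
        ∀ τ ∈ Icc (0:ℝ) T,
          W τ ≤ C₀ * Real.exp ((q - p) * τ) * u τ ∧
          v τ ≤ A * Real.exp ((r - p + 2 * δ) * τ) * u τ := by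
  set M : ℝ := C₀ * Real.exp (|q - p| * T) with hM
  set M' : ℝ := C₀ * Real.exp (|q - r| * T) with hM'
  have hMpos : 0 < M := mul_pos (lt_of_lt_of_le one_pos hC₀) (Real.exp_pos _)
  have hM'pos : 0 < M' := mul_pos (lt_of_lt_of_le one_pos hC₀) (Real.exp_pos _)
  have hden1 : 0 < M * (1 + δ * T) := by positivity
  have hden2 : 0 < M' + M * (1 + 2 * δ * T) := by positivity
  refine ⟨min δ (min (δ / (M * (1 + δ * T))) (2 * δ / (M' + M * (1 + 2 * δ * T)))), ?_, ?_⟩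
  · refine lt_min hδ0 (lt_min ?_ ?_) <;> positivity
  intro ε hε0 hεb u v W hu hv hW hpos hiu hiW hiv hW0 hv0
  -- extract the three smallness conditions
  have hε1 : ε ≤ δ := hεb.trans (min_le_left _ _)
  have hε2 : ε * (M * (1 + δ * T)) ≤ δ := by
    have h := hεb.trans ((min_le_right _ _).trans (min_le_left _ _))
    calc ε * (M * (1 + δ * T)) ≤ (δ / (M * (1 + δ * T))) * (M * (1 + δ * T)) :=
          mul_le_mul_of_nonneg_right h hden1.le
      _ = δ := div_mul_cancel₀ _ hden1.ne'
  have hε3 : ε * (M' + M * (1 + 2 * δ * T)) ≤ 2 * δ := by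
    have h := hεb.trans ((min_le_right _ _).trans (min_le_right _ _))
    calc ε * (M' + M * (1 + 2 * δ * T))
        ≤ (2 * δ / (M' + M * (1 + 2 * δ * T))) * (M' + M * (1 + 2 * δ * T)) :=
          mul_le_mul_of_nonneg_right h hden2.le
      _ = 2 * δ := div_mul_cancel₀ _ hden2.ne'
  have hu00 : 0 ≤ u 0 := (hpos 0 ⟨le_rfl, hT.le⟩).1
  have hmemIcc : ∀ x ∈ Ioo (0:ℝ) T, x ∈ Icc (0:ℝ) T := fun x hx => Ioo_subset_Icc_self hx
  have hnhds : ∀ x ∈ Ioo (0:ℝ) T, Icc (0:ℝ) T ∈ nhds x := fun x hx => Icc_mem_nhds hx.1 hx.2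
  -- weighted functions
  set fu : ℝ → ℝ := fun t => Real.exp (-p * t) * u t with hfu
  set fW : ℝ → ℝ := fun t => Real.exp (-q * t) * W t with hfW
  set fv : ℝ → ℝ := fun t => Real.exp (-r * t) * v t with hfv
  have hfuD : DifferentiableOn ℝ fu (Icc 0 T) :=
    ((Real.differentiable_exp.comp (differentiable_id.const_mul (-p))).differentiableOn).mul hu
  have hfWD : DifferentiableOn ℝ fW (Icc 0 T) :=
    ((Real.differentiable_exp.comp (differentiable_id.const_mul (-q))).differentiableOn).mul hW
  have hfvD : DifferentiableOn ℝ fv (Icc 0 T) :=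
    ((Real.differentiable_exp.comp (differentiable_id.const_mul (-r))).differentiableOn).mul hv
  have hfuAt : ∀ x ∈ Ioo (0:ℝ) T, HasDerivAt fu (derivWithin fu (Icc 0 T) x) x := by
    intro x hx
    rw [derivWithin_of_mem_nhds (hnhds x hx)]
    exact ((hfuD x (hmemIcc x hx)).differentiableAt (hnhds x hx)).hasDerivAt
  have hfWAt : ∀ x ∈ Ioo (0:ℝ) T, HasDerivAt fW (derivWithin fW (Icc 0 T) x) x := by
    intro x hx
    rw [derivWithin_of_mem_nhds (hnhds x hx)]
    exact ((hfWD x (hmemIcc x hx)).differentiableAt (hnhds x hx)).hasDerivAt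
  have hfvAt : ∀ x ∈ Ioo (0:ℝ) T, HasDerivAt fv (derivWithin fv (Icc 0 T) x) x := by
    intro x hx
    rw [derivWithin_of_mem_nhds (hnhds x hx)]
    exact ((hfvD x (hmemIcc x hx)).differentiableAt (hnhds x hx)).hasDerivAt
  have hfWnn : ∀ τ ∈ Icc (0:ℝ) T, 0 ≤ fW τ :=
    fun τ hτ => mul_nonneg (Real.exp_pos _).le (hpos τ hτ).2.2
  -- Step 1: decay of W
  have hWdecay : ∀ τ ∈ Icc (0:ℝ) T, Real.exp ((2 * δ - ε) * τ) * fW τ ≤ W 0 := by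
    have key := le_lin_of_deriv_le (T := T) (K := (0:ℝ))
      (f := fun t => Real.exp ((2 * δ - ε) * t) * fW t)
      (((Real.continuous_exp.comp (continuous_const.mul continuous_id)).continuousOn).mul
        hfWD.continuousOn)
      (fun x hx =>
        (((hda_expMul (2 * δ - ε) x).mul (hfWAt x hx)).differentiableAt).differentiableWithinAt)
      (by
        intro x hx
        rw [HasDerivAt.deriv (f := fun t => Real.exp ((2 * δ - ε) * t) * fW t)
          ((hda_expMul (2 * δ - ε) x).mul (hfWAt x hx))]
        have hiWx := hiW x (hmemIcc x hx)
        have hE : (0:ℝ) < Real.exp ((2 * δ - ε) * x) := Real.exp_pos _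
        have h2 : Real.exp ((2 * δ - ε) * x) * derivWithin fW (Icc 0 T) x ≤
            Real.exp ((2 * δ - ε) * x) * ((-2 * δ + ε) * fW x) := by
          apply mul_le_mul_of_nonneg_left _ hE.le
          calc derivWithin fW (Icc 0 T) x ≤ (-2 * δ + ε) * Real.exp (-q * x) * W x := hiWx
            _ = (-2 * δ + ε) * fW x := by simp only [hfW]; ring
        nlinarith [h2])
    intro τ hτ
    have h : Real.exp ((2 * δ - ε) * τ) * fW τ ≤
        Real.exp ((2 * δ - ε) * 0) * fW 0 + 0 * τ := key τ hτ
    have h0 : Real.exp ((2 * δ - ε) * 0) * fW 0 = W 0 := by simp [hfW]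
    linarith
  -- consequence: fW τ ≤ C₀ u 0 exp((ε-2δ)τ) ≤ C₀ u 0
  have hfWle : ∀ τ ∈ Icc (0:ℝ) T, fW τ ≤ C₀ * u 0 * Real.exp ((ε - 2 * δ) * τ) := by
    intro τ hτ
    have h1 := hWdecay τ hτ
    have h2 : Real.exp ((ε - 2 * δ) * τ) * Real.exp ((2 * δ - ε) * τ) = 1 := by
      rw [← Real.exp_add, show (ε - 2 * δ) * τ + (2 * δ - ε) * τ = 0 by ring, Real.exp_zero]
    calc fW τ = (Real.exp ((ε - 2 * δ) * τ) * Real.exp ((2 * δ - ε) * τ)) * fW τ := by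
          rw [h2, one_mul]
      _ = Real.exp ((ε - 2 * δ) * τ) * (Real.exp ((2 * δ - ε) * τ) * fW τ) := by ring
      _ ≤ Real.exp ((ε - 2 * δ) * τ) * W 0 := mul_le_mul_of_nonneg_left h1 (Real.exp_pos _).le
      _ ≤ Real.exp ((ε - 2 * δ) * τ) * (C₀ * u 0) :=
          mul_le_mul_of_nonneg_left hW0 (Real.exp_pos _).le
      _ = C₀ * u 0 * Real.exp ((ε - 2 * δ) * τ) := by ring
  have hfWle0 : ∀ τ ∈ Icc (0:ℝ) T, fW τ ≤ C₀ * u 0 := by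
    intro τ hτ
    have h1 := hfWle τ hτ
    have h2 : Real.exp ((ε - 2 * δ) * τ) ≤ 1 := by
      rw [Real.exp_le_one_iff]
      nlinarith [hτ.1]
    have hC0u : (0:ℝ) ≤ C₀ * u 0 := mul_nonneg (by linarith) hu00
    nlinarith [mul_le_mul_of_nonneg_left h2 hC0u]
  -- generic bound on exp(-σx) W x
  have hWgen : ∀ σ : ℝ, ∀ x ∈ Icc (0:ℝ) T,
      Real.exp (-σ * x) * W x ≤ Real.exp (|q - σ| * T) * (C₀ * u 0) := by
    intro σ x hx
    have e1 : Real.exp ((q - σ) * x) * Real.exp (-q * x) = Real.exp (-σ * x) := by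
      rw [← Real.exp_add]; congr 1; ring
    have heq : Real.exp (-σ * x) * W x = Real.exp ((q - σ) * x) * fW x := by
      calc Real.exp (-σ * x) * W x
          = (Real.exp ((q - σ) * x) * Real.exp (-q * x)) * W x := by rw [e1]
        _ = Real.exp ((q - σ) * x) * fW x := by simp only [hfW]; ring
    rw [heq]
    apply mul_le_mul _ (hfWle0 x hx) (hfWnn x hx) (Real.exp_pos _).le
    apply Real.exp_le_exp.2
    calc (q - σ) * x ≤ |q - σ| * x := mul_le_mul_of_nonneg_right (le_abs_self _) hx.1
      _ ≤ |q - σ| * T := mul_le_mul_of_nonneg_left hx.2 (abs_nonneg _)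
  -- Step 2: lower bound for fu
  have huLow : ∀ τ ∈ Icc (0:ℝ) T, u 0 - ε * (M * u 0) * τ ≤ fu τ := by
    have key := le_lin_of_deriv_le (T := T) (K := ε * (M * u 0))
      (f := fun t => -fu t)
      hfuD.continuousOn.neg
      (fun x hx => (((hfuAt x hx).neg).differentiableAt).differentiableWithinAt)
      (by
        intro x hx
        rw [HasDerivAt.deriv (f := fun t => -fu t) ((hfuAt x hx).neg)]
        have h1 := hiu x (hmemIcc x hx)
        have h2 : Real.exp (-p * x) * W x ≤ M * u 0 := by
          have h3 := hWgen p x (hmemIcc x hx)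
          calc Real.exp (-p * x) * W x ≤ Real.exp (|q - p| * T) * (C₀ * u 0) := h3
            _ = M * u 0 := by rw [hM]; ring
        nlinarith [h1, mul_le_mul_of_nonneg_left h2 hε0.le])
    intro τ hτ
    have h : -fu τ ≤ -fu 0 + ε * (M * u 0) * τ := key τ hτ
    have h0 : fu 0 = u 0 := by simp [hfu]
    linarith
  -- Step 3: upper bound for fv
  have hvUp : ∀ τ ∈ Icc (0:ℝ) T, fv τ ≤ A * u 0 + ε * (M' * u 0) * τ := by
    have key := le_lin_of_deriv_le (T := T) (K := ε * (M' * u 0)) (f := fv)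
      hfvD.continuousOn
      (fun x hx => ((hfvAt x hx).differentiableAt).differentiableWithinAt)
      (by
        intro x hx
        rw [(hfvAt x hx).deriv]
        have h1 := hiv x (hmemIcc x hx)
        have h2 : Real.exp (-r * x) * W x ≤ M' * u 0 := by
          have h3 := hWgen r x (hmemIcc x hx)
          calc Real.exp (-r * x) * W x ≤ Real.exp (|q - r| * T) * (C₀ * u 0) := h3
            _ = M' * u 0 := by rw [hM']; ring
        nlinarith [h1, mul_le_mul_of_nonneg_left h2 hε0.le])
    intro τ hτ
    have h : fv τ ≤ fv 0 + ε * (M' * u 0) * τ := key τ hτ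
    have h0 : fv 0 = v 0 := by simp [hfv]
    linarith
  -- Step 4: final arithmetic
  intro τ hτ
  have hτ0 : (0:ℝ) ≤ τ := hτ.1
  have hτT : τ ≤ T := hτ.2
  have hEq : (0:ℝ) < Real.exp (q * τ) := Real.exp_pos _
  have hEr : (0:ℝ) < Real.exp (r * τ) := Real.exp_pos _
  have hE2δ : (0:ℝ) < Real.exp (2 * δ * τ) := Real.exp_pos _
  -- the key scalar inequality: exp((ε-2δ)τ) ≤ 1 - ε M τ
  have hscal : Real.exp ((ε - 2 * δ) * τ) ≤ 1 - ε * M * τ := by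
    have h1 : Real.exp ((ε - 2 * δ) * τ) ≤ Real.exp (-(δ * τ)) := by
      apply Real.exp_le_exp.2
      nlinarith
    have h2 : 1 + δ * τ ≤ Real.exp (δ * τ) := by linarith [Real.add_one_le_exp (δ * τ)]
    have h3 : Real.exp (-(δ * τ)) * (1 + δ * τ) ≤ 1 := by
      have h4 := mul_le_mul_of_nonneg_left h2 (Real.exp_pos (-(δ * τ))).le
      rwa [← Real.exp_add, show -(δ * τ) + δ * τ = 0 by ring, Real.exp_zero] at h4
    have h4 : (0:ℝ) < 1 + δ * τ := by positivity
    have h5 : ε * M * τ * (1 + δ * τ) ≤ δ * τ := by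
      have hmono : ε * (M * (1 + δ * τ)) ≤ δ := by
        have hx : ε * (M * (1 + δ * τ)) ≤ ε * (M * (1 + δ * T)) := by
          nlinarith [mul_nonneg (mul_nonneg hε0.le hMpos.le)
            (mul_nonneg hδ0.le (sub_nonneg.2 hτT))]
        linarith [hε2]
      nlinarith [mul_le_mul_of_nonneg_right hmono hτ0]
    have h6 : Real.exp ((ε - 2 * δ) * τ) * (1 + δ * τ) ≤ 1 :=
      le_trans (mul_le_mul_of_nonneg_right h1 h4.le) h3
    nlinarith [h6, h5, h4]
  have huLowτ := huLow τ hτ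
  have hnn : (0:ℝ) ≤ 1 - ε * M * τ := by
    linarith [Real.exp_pos ((ε - 2 * δ) * τ), hscal]
  constructor
  · -- W bound
    have h1 := hfWle τ hτ
    have hC0u : (0:ℝ) ≤ C₀ * u 0 := mul_nonneg (by linarith) hu00
    have hchain : fW τ ≤ C₀ * fu τ := by
      calc fW τ ≤ C₀ * u 0 * Real.exp ((ε - 2 * δ) * τ) := h1
        _ ≤ C₀ * u 0 * (1 - ε * M * τ) := mul_le_mul_of_nonneg_left hscal hC0u
        _ = C₀ * (u 0 - ε * (M * u 0) * τ) := by ring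
        _ ≤ C₀ * fu τ := mul_le_mul_of_nonneg_left huLowτ (by linarith)
    have hWτ : W τ = Real.exp (q * τ) * fW τ := by
      simp only [hfW]
      rw [← mul_assoc, ← Real.exp_add, show q * τ + -q * τ = 0 by ring, Real.exp_zero, one_mul]
    calc W τ = Real.exp (q * τ) * fW τ := hWτ
      _ ≤ Real.exp (q * τ) * (C₀ * fu τ) := mul_le_mul_of_nonneg_left hchain hEq.le
      _ = C₀ * (Real.exp (q * τ) * Real.exp (-p * τ)) * u τ := by simp only [hfu]; ring
      _ = C₀ * Real.exp ((q - p) * τ) * u τ := by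
          rw [← Real.exp_add, show q * τ + -p * τ = (q - p) * τ by ring]
  · -- v bound
    have h1 := hvUp τ hτ
    have hexp2 : 1 + 2 * δ * τ ≤ Real.exp (2 * δ * τ) := by
      linarith [Real.add_one_le_exp (2 * δ * τ)]
    have hstuff : ε * M' * τ + ε * M * τ * (1 + 2 * δ * τ) ≤ 2 * δ * τ := by
      have hmono : ε * (M' + M * (1 + 2 * δ * τ)) ≤ 2 * δ := by
        have hx : ε * (M' + M * (1 + 2 * δ * τ)) ≤ ε * (M' + M * (1 + 2 * δ * T)) := by
          nlinarith [mul_nonneg (mul_nonneg hε0.le hMpos.le)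
            (mul_nonneg (by linarith : (0:ℝ) ≤ 2 * δ) (sub_nonneg.2 hτT))]
        linarith [hε3]
      nlinarith [mul_le_mul_of_nonneg_right hmono hτ0]
    have hs : (0:ℝ) ≤ 2 * δ * τ - ε * M' * τ - ε * M * τ * (1 + 2 * δ * τ) := by linarith
    have t1 : (0:ℝ) ≤ u 0 * (2 * δ * τ - ε * M' * τ - ε * M * τ * (1 + 2 * δ * τ)) :=
      mul_nonneg hu00 hs
    have t2 : (0:ℝ) ≤ (A - 1) * (u 0 * (2 * δ * τ - ε * M' * τ - ε * M * τ * (1 + 2 * δ * τ))) :=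
      mul_nonneg (by linarith) t1
    have t3 : (0:ℝ) ≤ (A - 1) * (ε * (M' * u 0) * τ) :=
      mul_nonneg (by linarith) (by positivity)
    have hmid : A * u 0 + ε * (M' * u 0) * τ ≤
        A * ((1 + 2 * δ * τ) * (u 0 - ε * (M * u 0) * τ)) := by
      linarith [t1, t2, t3]
    have hlow2 : (0:ℝ) ≤ u 0 - ε * (M * u 0) * τ := by
      nlinarith [mul_nonneg hu00 hnn]
    have hchain : fv τ ≤ A * (Real.exp (2 * δ * τ) * fu τ) := by
      calc fv τ ≤ A * u 0 + ε * (M' * u 0) * τ := h1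
        _ ≤ A * ((1 + 2 * δ * τ) * (u 0 - ε * (M * u 0) * τ)) := hmid
        _ ≤ A * (Real.exp (2 * δ * τ) * (u 0 - ε * (M * u 0) * τ)) :=
            mul_le_mul_of_nonneg_left (mul_le_mul_of_nonneg_right hexp2 hlow2) (by linarith)
        _ ≤ A * (Real.exp (2 * δ * τ) * fu τ) :=
            mul_le_mul_of_nonneg_left (mul_le_mul_of_nonneg_left huLowτ hE2δ.le) (by linarith)
    have hvτ : v τ = Real.exp (r * τ) * fv τ := by
      simp only [hfv]
      rw [← mul_assoc, ← Real.exp_add, show r * τ + -r * τ = 0 by ring, Real.exp_zero, one_mul]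
    calc v τ = Real.exp (r * τ) * fv τ := hvτ
      _ ≤ Real.exp (r * τ) * (A * (Real.exp (2 * δ * τ) * fu τ)) :=
          mul_le_mul_of_nonneg_left hchain hEr.le
      _ = A * (Real.exp (r * τ) * Real.exp (2 * δ * τ) * Real.exp (-p * τ)) * u τ := by
          simp only [hfu]; ring
      _ = A * Real.exp ((r - p + 2 * δ) * τ) * u τ := by
          rw [← Real.exp_add, ← Real.exp_add,
            show r * τ + 2 * δ * τ + -p * τ = (r - p + 2 * δ) * τ by ring]
end

section
/- For all λ > 0, δ > 0, C > 0 and δ' ∈ (0, δ) there exists τ₀ ≤ 0, depending only on λ, δ, δ', C, with the following property. Let u, v : (−∞, 0] → [0, ∞) be differentiable functions such that u(τ) + v(τ) > 0 for every τ ≤ 0, u(τ) + v(τ) → 0 as τ → −∞, and for all τ ≤ 0: u'(τ) ≥ 2λ·u(τ) − C·e^{δτ}·(u(τ) + v(τ)) and v'(τ) ≤ C·e^{δτ}·(u(τ) + v(τ)). Then v(τ) < e^{δ'τ}·u(τ) for all τ ≤ τ₀. -/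
open Set Filter Topology

private lemma hasDerivAt_exp_mul_aux (a x : ℝ) :
    HasDerivAt (fun τ : ℝ => Real.exp (a * τ)) (a * Real.exp (a * x)) x := by
  simpa [mul_comm] using ((hasDerivAt_id x).const_mul a).exp

private lemma antitoneOn_aux {f : ℝ → ℝ} {b : ℝ} (hb : b < 0)
    (hd : ∀ x : ℝ, x < 0 → DifferentiableAt ℝ f x)
    (hd' : ∀ x : ℝ, x < b → deriv f x ≤ 0) : AntitoneOn f (Iic b) := by
  apply antitoneOn_of_deriv_nonpos (convex_Iic b)
  · intro x hx
    exact (hd x (lt_of_le_of_lt hx hb)).continuousAt.continuousWithinAt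
  · intro x hx
    rw [interior_Iic] at hx
    exact (hd x (hx.trans hb)).differentiableWithinAt
  · intro x hx
    rw [interior_Iic] at hx
    exact hd' x hx

set_option maxHeartbeats 1000000 in
/-- Scalar ODE core of the dominance of unstable modes for ancient solutions:
if `u, v : (-∞,0] → [0,∞)` are differentiable with `u + v > 0`, `u + v → 0` as
`τ → -∞`, `u' ≥ 2λu - C e^{δτ}(u+v)` and `v' ≤ C e^{δτ}(u+v)`, then
`v < e^{δ'τ} u` for all sufficiently negative `τ`, with threshold `τ₀` depending
only on `λ, δ, δ', C`. -/
theorem scalar_unstable_dominance (lam δ C δ' : ℝ)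
    (hlam : 0 < lam) (hδ : 0 < δ) (hC : 0 < C) (hδ'0 : 0 < δ') (hδ' : δ' < δ) :
    ∃ τ₀ : ℝ, τ₀ ≤ 0 ∧
      ∀ u v : ℝ → ℝ,
        DifferentiableOn ℝ u (Iic 0) →
        DifferentiableOn ℝ v (Iic 0) →
        (∀ τ : ℝ, τ ≤ 0 → 0 ≤ u τ ∧ 0 ≤ v τ) →
        (∀ τ : ℝ, τ ≤ 0 → 0 < u τ + v τ) →
        Tendsto (fun τ => u τ + v τ) atBot (nhds 0) →
        (∀ τ : ℝ, τ ≤ 0 →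
          2 * lam * u τ - C * Real.exp (δ * τ) * (u τ + v τ) ≤
            derivWithin u (Iic 0) τ) →
        (∀ τ : ℝ, τ ≤ 0 →
          derivWithin v (Iic 0) τ ≤ C * Real.exp (δ * τ) * (u τ + v τ)) →
        ∀ τ : ℝ, τ ≤ τ₀ → v τ < Real.exp (δ' * τ) * u τ := by
  have hδδ' : 0 < δ - δ' := by linarith
  refine ⟨min (-1) (Real.log (δ' / (4 * C)) / (δ - δ')), le_trans (min_le_left _ _) (by norm_num),
    ?_⟩
  set τ₀ : ℝ := min (-1) (Real.log (δ' / (4 * C)) / (δ - δ')) with hτ₀def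
  have hτ₀neg : τ₀ < 0 := lt_of_le_of_lt (min_le_left _ _) (by norm_num)
  have hkey : ∀ x : ℝ, x ≤ τ₀ → 4 * C * Real.exp ((δ - δ') * x) ≤ δ' := by
    intro x hx
    have h1 : (δ - δ') * x ≤ Real.log (δ' / (4 * C)) := by
      have hx2 : x ≤ Real.log (δ' / (4 * C)) / (δ - δ') := hx.trans (min_le_right _ _)
      calc (δ - δ') * x ≤ (δ - δ') * (Real.log (δ' / (4 * C)) / (δ - δ')) :=
            mul_le_mul_of_nonneg_left hx2 hδδ'.le
        _ = Real.log (δ' / (4 * C)) := by field_simp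
    have h2 : Real.exp ((δ - δ') * x) ≤ δ' / (4 * C) :=
      (Real.exp_le_exp.mpr h1).trans_eq (Real.exp_log (by positivity))
    have h3 : Real.exp ((δ - δ') * x) * (4 * C) ≤ δ' := (le_div_iff₀ (by positivity)).mp h2
    linarith
  intro u v hu hv hnn hpos htend hu' hv' τ₁ hτ₁
  by_contra hcon
  push_neg at hcon
  have hτ₁neg : τ₁ < 0 := lt_of_le_of_lt hτ₁ hτ₀neg
  -- derivWithin = deriv on the interior
  have hue : ∀ x : ℝ, x < 0 → HasDerivAt u (derivWithin u (Iic 0) x) x := by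
    intro x hx
    have hmem : Iic (0 : ℝ) ∈ 𝓝 x := Iic_mem_nhds hx
    rw [derivWithin_of_mem_nhds hmem]
    exact ((hu x hx.le).differentiableAt hmem).hasDerivAt
  have hve : ∀ x : ℝ, x < 0 → HasDerivAt v (derivWithin v (Iic 0) x) x := by
    intro x hx
    have hmem : Iic (0 : ℝ) ∈ 𝓝 x := Iic_mem_nhds hx
    rw [derivWithin_of_mem_nhds hmem]
    exact ((hv x hx.le).differentiableAt hmem).hasDerivAt
  -- Step A: the integrating-factor function G for h = v - e^{δ'τ} u
  have hGder : ∀ x : ℝ, x < 0 → HasDerivAt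
      (fun τ => (v τ - Real.exp (δ' * τ) * u τ) *
        Real.exp (-(C / δ * Real.exp (δ * τ) + C / (δ + δ') * Real.exp ((δ + δ') * τ))))
      ((derivWithin v (Iic 0) x -
          (δ' * Real.exp (δ' * x) * u x + Real.exp (δ' * x) * derivWithin u (Iic 0) x)) *
        Real.exp (-(C / δ * Real.exp (δ * x) + C / (δ + δ') * Real.exp ((δ + δ') * x)))
        + (v x - Real.exp (δ' * x) * u x) *
          (Real.exp (-(C / δ * Real.exp (δ * x) + C / (δ + δ') * Real.exp ((δ + δ') * x))) *
            (-(C * Real.exp (δ * x) + C * Real.exp ((δ + δ') * x))))) x := by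
    intro x hx
    have h1 := (hve x hx).sub ((hasDerivAt_exp_mul_aux δ' x).mul (hue x hx))
    have hF : HasDerivAt
        (fun τ => C / δ * Real.exp (δ * τ) + C / (δ + δ') * Real.exp ((δ + δ') * τ))
        (C * Real.exp (δ * x) + C * Real.exp ((δ + δ') * x)) x := by
      have h2 := ((hasDerivAt_exp_mul_aux δ x).const_mul (C / δ)).add
        ((hasDerivAt_exp_mul_aux (δ + δ') x).const_mul (C / (δ + δ')))
      refine h2.congr_deriv ?_
      have hδ0 : δ ≠ 0 := ne_of_gt hδ
      have hδδ'0 : δ + δ' ≠ 0 := by positivity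
      field_simp
    exact h1.mul hF.neg.exp
  have hA : ∀ τ : ℝ, τ ≤ τ₁ → Real.exp (δ' * τ) * u τ ≤ v τ := by
    have hanti : AntitoneOn
        (fun τ => (v τ - Real.exp (δ' * τ) * u τ) *
          Real.exp (-(C / δ * Real.exp (δ * τ) + C / (δ + δ') * Real.exp ((δ + δ') * τ))))
        (Iic τ₁) := by
      apply antitoneOn_aux hτ₁neg
      · intro x hx
        exact (hGder x hx).differentiableAt
      · intro x hx
        have hx0 : x < 0 := hx.trans hτ₁neg
        rw [(hGder x hx0).deriv]
        have hdu := hu' x hx0.le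
        have hdv := hv' x hx0.le
        obtain ⟨hun, hvn⟩ := hnn x hx0.le
        have hk := hkey x (hx.le.trans hτ₁)
        have he1 : Real.exp (δ' * x) ≤ 1 := Real.exp_le_one_iff.mpr (by nlinarith)
        have he0 : (0 : ℝ) < Real.exp (δ' * x) := Real.exp_pos _
        have hE1 : (0 : ℝ) < Real.exp (δ * x) := Real.exp_pos _
        have hEF : (0 : ℝ) < Real.exp
            (-(C / δ * Real.exp (δ * x) + C / (δ + δ') * Real.exp ((δ + δ') * x))) :=
          Real.exp_pos _
        have hsplit : Real.exp ((δ + δ') * x) = Real.exp (δ * x) * Real.exp (δ' * x) := by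
          rw [← Real.exp_add]; congr 1; ring
        have hsplit2 : Real.exp ((δ - δ') * x) * Real.exp (δ' * x) = Real.exp (δ * x) := by
          rw [← Real.exp_add]; congr 1; ring
        set e := Real.exp (δ' * x)
        set E1 := Real.exp (δ * x)
        -- key coefficient bound: C E1 (1+e)^2 ≤ δ' e
        have hb1 : C * E1 * (1 + e) ^ 2 ≤ δ' * e := by
          have hsq : (1 + e) ^ 2 ≤ 4 := by nlinarith
          have h4 : C * E1 * (1 + e) ^ 2 ≤ 4 * (C * E1) := by
            nlinarith [mul_le_mul_of_nonneg_left hsq (mul_pos hC hE1).le]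
          have h5 : 4 * (C * E1) = 4 * C * Real.exp ((δ - δ') * x) * e := by
            rw [← hsplit2]; ring
          linarith [h4, mul_le_mul_of_nonneg_right hk he0.le]
        -- the differential inequality h' ≤ φ h
        have hmain : derivWithin v (Iic 0) x -
            (δ' * e * u x + e * derivWithin u (Iic 0) x) -
            (v x - e * u x) * (C * E1 + C * (E1 * e)) ≤ 0 := by
          have t1 := mul_le_mul_of_nonneg_left hdu he0.le
          have t2 := mul_le_mul_of_nonneg_right hb1 hun
          have t3 : 0 ≤ lam * e * u x := mul_nonneg (mul_nonneg hlam.le he0.le) hun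
          linarith [t1, t2, t3, hdv]
        rw [hsplit]
        set EF := Real.exp (-(C / δ * E1 + C / (δ + δ') * (E1 * e)))
        have hrw : (derivWithin v (Iic 0) x - (δ' * e * u x + e * derivWithin u (Iic 0) x)) * EF
            + (v x - e * u x) * (EF * (-(C * E1 + C * (E1 * e)))) =
            (derivWithin v (Iic 0) x - (δ' * e * u x + e * derivWithin u (Iic 0) x) -
              (v x - e * u x) * (C * E1 + C * (E1 * e))) * EF := by ring
        rw [hrw]
        exact mul_nonpos_of_nonpos_of_nonneg hmain (Real.exp_pos _).le
    intro τ hτ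
    have h1 := hanti (mem_Iic.mpr hτ) (mem_Iic.mpr le_rfl) hτ
    have h2 : 0 ≤ (v τ₁ - Real.exp (δ' * τ₁) * u τ₁) *
        Real.exp (-(C / δ * Real.exp (δ * τ₁) + C / (δ + δ') * Real.exp ((δ + δ') * τ₁))) :=
      mul_nonneg (by linarith) (Real.exp_pos _).le
    have h3 := h2.trans h1
    by_contra hg
    push_neg at hg
    have h4 := mul_pos (sub_pos.mpr hg)
      (Real.exp_pos (-(C / δ * Real.exp (δ * τ) + C / (δ + δ') * Real.exp ((δ + δ') * τ))))
    nlinarith [h3, h4]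
  -- Step B: v is bounded below by a positive constant on (-∞, τ₁]
  have hWder : ∀ x : ℝ, x < 0 → HasDerivAt
      (fun τ => v τ * Real.exp (-(2 * C / (δ - δ') * Real.exp ((δ - δ') * τ))))
      (derivWithin v (Iic 0) x * Real.exp (-(2 * C / (δ - δ') * Real.exp ((δ - δ') * x)))
        + v x * (Real.exp (-(2 * C / (δ - δ') * Real.exp ((δ - δ') * x))) *
          (-(2 * C * Real.exp ((δ - δ') * x))))) x := by
    intro x hx
    have hΨ : HasDerivAt (fun τ => 2 * C / (δ - δ') * Real.exp ((δ - δ') * τ))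
        (2 * C * Real.exp ((δ - δ') * x)) x := by
      have h2 := (hasDerivAt_exp_mul_aux (δ - δ') x).const_mul (2 * C / (δ - δ'))
      refine h2.congr_deriv ?_
      have : δ - δ' ≠ 0 := ne_of_gt hδδ'
      field_simp
    exact (hve x hx).mul hΨ.neg.exp
  have hWanti : AntitoneOn
      (fun τ => v τ * Real.exp (-(2 * C / (δ - δ') * Real.exp ((δ - δ') * τ)))) (Iic τ₁) := by
    apply antitoneOn_aux hτ₁neg
    · intro x hx
      exact (hWder x hx).differentiableAt
    · intro x hx
      have hx0 : x < 0 := hx.trans hτ₁neg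
      rw [(hWder x hx0).deriv]
      have hdv := hv' x hx0.le
      obtain ⟨hun, hvn⟩ := hnn x hx0.le
      have hAx := hA x hx.le
      have he1 : Real.exp (δ' * x) ≤ 1 := Real.exp_le_one_iff.mpr (by nlinarith)
      have he0 : (0 : ℝ) < Real.exp (δ' * x) := Real.exp_pos _
      have hE1 : (0 : ℝ) < Real.exp (δ * x) := Real.exp_pos _
      have hE3 : (0 : ℝ) < Real.exp ((δ - δ') * x) := Real.exp_pos _
      have hEW : (0 : ℝ) < Real.exp (-(2 * C / (δ - δ') * Real.exp ((δ - δ') * x))) :=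
        Real.exp_pos _
      have hsplit2 : Real.exp ((δ - δ') * x) * Real.exp (δ' * x) = Real.exp (δ * x) := by
        rw [← Real.exp_add]; congr 1; ring
      have hmain : derivWithin v (Iic 0) x - 2 * C * Real.exp ((δ - δ') * x) * v x ≤ 0 := by
        -- multiply through by e = exp(δ'x) > 0
        have h1 : Real.exp (δ' * x) * derivWithin v (Iic 0) x ≤
            Real.exp (δ' * x) * (C * Real.exp (δ * x) * (u x + v x)) :=
          mul_le_mul_of_nonneg_left hdv he0.le
        have hq1 : C * Real.exp (δ * x) * (Real.exp (δ' * x) * u x) ≤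
            C * Real.exp (δ * x) * v x :=
          mul_le_mul_of_nonneg_left hAx (mul_pos hC hE1).le
        have hq2 : Real.exp (δ' * x) * (C * Real.exp (δ * x) * v x) ≤
            1 * (C * Real.exp (δ * x) * v x) :=
          mul_le_mul_of_nonneg_right he1 (by positivity)
        have hX : Real.exp (δ' * x) *
            (derivWithin v (Iic 0) x - 2 * C * Real.exp ((δ - δ') * x) * v x) ≤ 0 := by
          have hE1eq : 2 * C * Real.exp ((δ - δ') * x) * v x * Real.exp (δ' * x) =
              2 * (C * Real.exp (δ * x) * v x) := by
            rw [← hsplit2]; ring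
          linarith [h1, hq1, hq2, hE1eq]
        by_contra hcon2
        push_neg at hcon2
        have := mul_pos he0 hcon2
        linarith [hX, this]
      have hrw : derivWithin v (Iic 0) x *
            Real.exp (-(2 * C / (δ - δ') * Real.exp ((δ - δ') * x)))
          + v x * (Real.exp (-(2 * C / (δ - δ') * Real.exp ((δ - δ') * x))) *
            (-(2 * C * Real.exp ((δ - δ') * x)))) =
          (derivWithin v (Iic 0) x - 2 * C * Real.exp ((δ - δ') * x) * v x) *
            Real.exp (-(2 * C / (δ - δ') * Real.exp ((δ - δ') * x))) := by ring
      rw [hrw]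
      exact mul_nonpos_of_nonpos_of_nonneg hmain hEW.le
  have hvτ₁ : 0 < v τ₁ := by
    nlinarith [Real.exp_pos (δ' * τ₁), hpos τ₁ hτ₁neg.le, (hnn τ₁ hτ₁neg.le).1,
      (hnn τ₁ hτ₁neg.le).2]
  set c : ℝ := v τ₁ * Real.exp (-(2 * C / (δ - δ') * Real.exp ((δ - δ') * τ₁))) with hcdef
  have hc : 0 < c := mul_pos hvτ₁ (Real.exp_pos _)
  have hvlow : ∀ τ : ℝ, τ ≤ τ₁ → c ≤ v τ := by
    intro τ hτ
    have h1 := hWanti (mem_Iic.mpr hτ) (mem_Iic.mpr le_rfl) hτ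
    have h2 : v τ * Real.exp (-(2 * C / (δ - δ') * Real.exp ((δ - δ') * τ))) ≤ v τ := by
      have hψ : (0 : ℝ) ≤ 2 * C / (δ - δ') * Real.exp ((δ - δ') * τ) := by positivity
      have h3 : Real.exp (-(2 * C / (δ - δ') * Real.exp ((δ - δ') * τ))) ≤ 1 :=
        Real.exp_le_one_iff.mpr (by linarith)
      have hvn := (hnn τ (hτ.trans hτ₁neg.le)).2
      have := mul_le_mul_of_nonneg_left h3 hvn
      linarith
    exact h1.trans h2
  -- contradiction with u + v → 0 at -∞
  have hev := htend (Iio_mem_nhds hc)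
  rw [mem_map, mem_atBot_sets] at hev
  obtain ⟨a, ha⟩ := hev
  have h1 := ha (min a τ₁) (min_le_left _ _)
  have h2 := hvlow (min a τ₁) (min_le_right _ _)
  have h3 := (hnn (min a τ₁) ((min_le_right _ _).trans hτ₁neg.le)).1
  simp only [mem_preimage, mem_Iio] at h1
  linarith
end

section
/- Let C₁ ≥ 1. There exist ε₀ > 0 and C > 0, depending only on C₁, λ_top := max_i λ_i, and the spectral gap g := min{|λ_i| : λ_i ≠ 0}, such that the following holds for every ε ∈ (0, ε₀]. Let h ∈ H with ‖h‖_{H_W} < ∞ satisfy: (1) ‖P⁰h‖² + ‖P⁺_lie h‖² ≤ ε·‖h‖²_{H_W}, and (2) ⟨P_ess h, L P_ess h⟩ ≤ C₁·ε·‖h‖²_{H_W}. Then ε^{−1}·( ‖P⁰h‖² + ‖P⁺_lie h‖² ) + ‖P⁺_ess h‖² ≤ C·|⟨P⁻h, L P⁻h⟩|. -/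
open Set Filter

noncomputable section

/-- The quadratic form `⟨P_S h, L (P_S h)⟩ = Σ_{i ∈ S} λ_i ⟨h, Y_i⟩²`. -/
def quadL {H : Type*} [NormedAddCommGroup H] [InnerProductSpace ℝ H]
    (Y : HilbertBasis ℕ ℝ H) (lam : ℕ → ℝ) (S : Set ℕ) (h : H) : ℝ :=
  ∑' i : ℕ, S.indicator (fun j => lam j * (inner ℝ h (Y j) : ℝ) ^ 2) i

section Aux
set_option linter.unusedSectionVars false

variable {H : Type*} [NormedAddCommGroup H] [InnerProductSpace ℝ H] [CompleteSpace H]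

lemma summable_sq (Y : HilbertBasis ℕ ℝ H) (h : H) :
    Summable fun i : ℕ => (inner ℝ h (Y i) : ℝ) ^ 2 := by
  have := Y.summable_inner_mul_inner h h
  refine this.congr fun i => ?_
  rw [real_inner_comm (Y i) h, sq]

lemma norm_proj_sq (Y : HilbertBasis ℕ ℝ H) (S : Set ℕ) (h : H) :
    ‖proj Y S h‖ ^ 2 =
      ∑' i : ℕ, S.indicator (fun j => (inner ℝ h (Y j) : ℝ) ^ 2) i := by
  simp only [proj]
  set c : ℕ → ℝ := fun i => inner ℝ h (Y i) with hc
  have hsum : Summable fun i => c i ^ 2 := summable_sq Y h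
  have hsq : ∀ i, (S.indicator c i) ^ 2 = S.indicator (fun j => c j ^ 2) i := fun i => by
    by_cases hi : i ∈ S <;> simp [hi]
  have hmem : Memℓp (S.indicator c) 2 := by
    apply memℓp_gen
    refine (hsum.indicator S).congr fun i => ?_
    rw [show ((2 : ENNReal)).toReal = ((2 : ℕ) : ℝ) by norm_num, Real.rpow_natCast,
      Real.norm_eq_abs, sq_abs]
    exact (hsq i).symm
  set F : lp (fun _ : ℕ => ℝ) 2 := ⟨S.indicator c, hmem⟩ with hF
  have hFi : ∀ i, (F : ∀ _ : ℕ, ℝ) i = S.indicator c i := fun i => rfl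
  have hhs : HasSum (fun i => (F : ∀ _ : ℕ, ℝ) i • (Y i : H)) (Y.repr.symm F) :=
    Y.hasSum_repr_symm F
  have heq : (∑' i : ℕ, S.indicator (fun j => (inner ℝ h (Y j) : ℝ) • (Y j : H)) i)
      = Y.repr.symm F := by
    rw [← hhs.tsum_eq]
    refine tsum_congr fun i => ?_
    by_cases hi : i ∈ S <;> simp [hFi, hi, hc]
  rw [heq, LinearIsometryEquiv.norm_map]
  have h2 : ‖F‖ ^ ((2 : ENNReal)).toReal = ∑' i, ‖(F : ∀ _ : ℕ, ℝ) i‖ ^ ((2:ENNReal)).toReal :=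
    lp.norm_rpow_eq_tsum (by norm_num) F
  rw [show ((2 : ENNReal)).toReal = ((2 : ℕ) : ℝ) by norm_num, Real.rpow_natCast] at h2
  rw [h2]
  refine tsum_congr fun i => ?_
  rw [Real.rpow_natCast, Real.norm_eq_abs, sq_abs, hFi, hsq i]

end Aux


lemma key_ineq (C₁ Λ g : ℝ) (hC₁ : 1 ≤ C₁) (hg : 0 < g) (lam a : ℕ → ℝ)
    (ha0 : ∀ i, 0 ≤ a i) (hΛ : ∀ i, lam i ≤ Λ)
    (hgap : ∀ i, lam i ≠ 0 → g ≤ |lam i|) (Sess : Set ℕ) (ε : ℝ)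
    (hε : 0 < ε) (hεε₀ : ε ≤ g / (2 * (g + C₁)))
    (sum_w : Summable fun i => (1 + max (-(lam i)) 0) * a i)
    (h1 : (∑' i, ({i | lam i = 0}).indicator a i) +
        (∑' i, ({i | i ∈ Sessᶜ ∧ 0 < lam i}).indicator a i) ≤
      ε * ∑' i, (1 + max (-(lam i)) 0) * a i)
    (h2 : (∑' i, Sess.indicator (fun j => lam j * a j) i) ≤
      C₁ * ε * ∑' i, (1 + max (-(lam i)) 0) * a i) :
    ε⁻¹ * ((∑' i, ({i | lam i = 0}).indicator a i) +
        (∑' i, ({i | i ∈ Sessᶜ ∧ 0 < lam i}).indicator a i)) +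
      (∑' i, ({i | i ∈ Sess ∧ 0 < lam i}).indicator a i) ≤
    ((2 * (g + 2) * (g + C₁) + g) / g ^ 2) *
      |∑' i, ({i | lam i < 0}).indicator (fun j => lam j * a j) i| := by
  have hC₁0 : (0 : ℝ) < C₁ := lt_of_lt_of_le one_pos hC₁
  have hm0 : ∀ i, 0 ≤ max (-(lam i)) 0 := fun i => le_max_right _ _
  have sum_a : Summable a :=
    Summable.of_nonneg_of_le ha0
      (fun i => by linarith only [mul_nonneg (hm0 i) (ha0 i)]) sum_w
  have sum_m : Summable (fun i => max (-(lam i)) 0 * a i) :=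
    (sum_w.sub sum_a).congr fun i => by ring
  set W := ∑' i, (1 + max (-(lam i)) 0) * a i with hWdef
  set N := ∑' i, ({i | lam i = 0}).indicator a i with hNdef
  set Ul := ∑' i, ({i | i ∈ Sessᶜ ∧ 0 < lam i}).indicator a i with hUldef
  set Ue := ∑' i, ({i | i ∈ Sess ∧ 0 < lam i}).indicator a i with hUedef
  set Q := ∑' i, Sess.indicator (fun j => lam j * a j) i with hQdef
  set Sneg := ∑' i, ({i | lam i < 0}).indicator a i with hSndef
  set A := ∑' i, max (-(lam i)) 0 * a i with hAdef
  clear_value W N Ul Ue Q Sneg A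
  have hA0 : 0 ≤ A := by
    rw [hAdef]; exact tsum_nonneg fun i => mul_nonneg (hm0 i) (ha0 i)
  have hW0 : 0 ≤ W := by
    rw [hWdef]
    exact tsum_nonneg fun i => mul_nonneg (add_nonneg zero_le_one (hm0 i)) (ha0 i)
  -- the negative-part quadratic form equals -A
  have hQn : (∑' i, ({i | lam i < 0}).indicator (fun j => lam j * a j) i) = -A := by
    rw [hAdef, ← tsum_neg]
    refine tsum_congr fun i => ?_
    rcases lt_trichotomy (lam i) 0 with hi | hi | hi
    · rw [Set.indicator_of_mem (show i ∈ {i | lam i < 0} from hi),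
        max_eq_left (by linarith : (0:ℝ) ≤ -lam i)]
      ring
    · rw [Set.indicator_of_notMem (by simp [hi] : i ∉ {i | lam i < 0})]
      simp [hi]
    · rw [Set.indicator_of_notMem (by simp [asymm hi] : i ∉ {i | lam i < 0}),
        max_eq_right (by linarith : -lam i ≤ 0)]
      ring
  have habs : |∑' i, ({i | lam i < 0}).indicator (fun j => lam j * a j) i| = A := by
    rw [hQn, abs_neg, abs_of_nonneg hA0]
  -- W = Σ a + A
  have hWeq : W = (∑' i, a i) + A := by
    have h' : W = ∑' i, (a i + max (-(lam i)) 0 * a i) :=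
      hWdef.trans (tsum_congr fun i => by ring)
    rw [Summable.tsum_add sum_a sum_m] at h'
    rw [hAdef]; exact h'
  -- partition of Σ a
  have hptw : ∀ i, a i = ({i | lam i = 0}).indicator a i +
      (({i | i ∈ Sessᶜ ∧ 0 < lam i}).indicator a i +
        (({i | i ∈ Sess ∧ 0 < lam i}).indicator a i + ({i | lam i < 0}).indicator a i)) := by
    intro i
    rcases lt_trichotomy (lam i) 0 with hi | hi | hi
    · simp [Set.indicator_apply, Set.mem_setOf_eq, hi, hi.ne, asymm hi]
    · simp [Set.indicator_apply, Set.mem_setOf_eq, hi]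
    · by_cases hS : i ∈ Sess <;>
        simp [Set.indicator_apply, Set.mem_setOf_eq, hi, hi.ne', asymm hi, hS]
  have hpart : (∑' i, a i) = N + (Ul + (Ue + Sneg)) := by
    rw [hNdef, hUldef, hUedef, hSndef]
    rw [tsum_congr hptw, Summable.tsum_add (sum_a.indicator _)
        ((sum_a.indicator _).add ((sum_a.indicator _).add (sum_a.indicator _))),
      Summable.tsum_add (sum_a.indicator _) ((sum_a.indicator _).add (sum_a.indicator _)),
      Summable.tsum_add (sum_a.indicator _) (sum_a.indicator _)]
  -- g * Sneg ≤ A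
  have hSneg : g * Sneg ≤ A := by
    rw [hSndef, ← Summable.tsum_mul_left g (sum_a.indicator _), hAdef]
    refine Summable.tsum_le_tsum (fun i => ?_) ((sum_a.indicator _).mul_left g) sum_m
    by_cases hi : lam i < 0
    · rw [Set.indicator_of_mem (show i ∈ {i | lam i < 0} from hi)]
      have hgi : g ≤ -lam i := by
        have hga := hgap i (ne_of_lt hi); rwa [abs_of_neg hi] at hga
      exact mul_le_mul_of_nonneg_right (le_trans hgi (le_max_left _ _)) (ha0 i)
    · rw [Set.indicator_of_notMem (by simpa using hi : i ∉ {i | lam i < 0}), mul_zero]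
      exact mul_nonneg (hm0 i) (ha0 i)
  -- summability of the essential quadratic form
  have habs' : ∀ i, |Sess.indicator (fun j => lam j * a j) i| ≤
      (|Λ| + 1) * ((1 + max (-(lam i)) 0) * a i) := by
    intro i
    by_cases hS : i ∈ Sess
    · rw [Set.indicator_of_mem hS, abs_mul, abs_of_nonneg (ha0 i)]
      have h₁ : |lam i| ≤ |Λ| + max (-(lam i)) 0 := by
        rcases le_or_gt 0 (lam i) with hi | hi
        · rw [abs_of_nonneg hi]
          linarith only [hΛ i, le_abs_self Λ, hm0 i]
        · rw [abs_of_neg hi]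
          linarith only [le_max_left (-(lam i)) 0, abs_nonneg Λ]
      linarith only [mul_le_mul_of_nonneg_right h₁ (ha0 i),
        mul_nonneg (mul_nonneg (abs_nonneg Λ) (hm0 i)) (ha0 i), ha0 i]
    · rw [Set.indicator_of_notMem hS, abs_zero]
      exact mul_nonneg (by positivity)
        (mul_nonneg (add_nonneg zero_le_one (hm0 i)) (ha0 i))
  have sum_q : Summable (Sess.indicator fun j => lam j * a j) :=
    Summable.of_abs (Summable.of_nonneg_of_le (fun i => abs_nonneg _) habs'
      (sum_w.mul_left _))
  -- g * Ue ≤ Q + A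
  have hUe2 : g * Ue ≤ Q + A := by
    rw [hUedef, ← Summable.tsum_mul_left g (sum_a.indicator _), hQdef, hAdef,
      ← Summable.tsum_add sum_q sum_m]
    refine Summable.tsum_le_tsum (fun i => ?_) ((sum_a.indicator _).mul_left g) (sum_q.add sum_m)
    by_cases hS : i ∈ Sess
    · rcases lt_trichotomy (lam i) 0 with hi | hi | hi
      · rw [Set.indicator_of_notMem (fun hmem => asymm hi hmem.2 :
            i ∉ {i | i ∈ Sess ∧ 0 < lam i}), Set.indicator_of_mem hS,
          max_eq_left (by linarith : (0:ℝ) ≤ -lam i), mul_zero]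
        have hz : lam i * a i + -lam i * a i = 0 := by ring
        linarith only [hz]
      · rw [Set.indicator_of_notMem (fun hmem => by
            rw [Set.mem_setOf_eq, hi] at hmem; exact lt_irrefl 0 hmem.2 :
            i ∉ {i | i ∈ Sess ∧ 0 < lam i}), Set.indicator_of_mem hS, hi, mul_zero]
        simp
      · rw [Set.indicator_of_mem (show i ∈ {i | i ∈ Sess ∧ 0 < lam i} from ⟨hS, hi⟩),
          Set.indicator_of_mem hS]
        have hgi : g ≤ lam i := by
          have hga := hgap i (ne_of_lt hi).symm; rwa [abs_of_pos hi] at hga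
        linarith only [mul_le_mul_of_nonneg_right hgi (ha0 i),
          mul_nonneg (hm0 i) (ha0 i)]
    · rw [Set.indicator_of_notMem (fun hmem => hS hmem.1 :
          i ∉ {i | i ∈ Sess ∧ 0 < lam i}), Set.indicator_of_notMem hS, mul_zero]
      linarith only [mul_nonneg (hm0 i) (ha0 i)]
  -- small-ε facts
  have hgC : (0:ℝ) < 2 * (g + C₁) := by positivity
  have hε1 : ε ≤ 1 := by
    refine le_trans hεε₀ ?_
    rw [div_le_one hgC]; linarith only [hg, hC₁0]
  have hε2 : ε * (g + C₁) ≤ g / 2 := by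
    have hmul := mul_le_mul_of_nonneg_right hεε₀ (by positivity : (0:ℝ) ≤ g + C₁)
    have heq : g / (2 * (g + C₁)) * (g + C₁) = g / 2 := by
      field_simp
    linarith only [hmul, heq]
  -- g * W ≤ 2 * (g + 2) * A
  have hgW : g * W ≤ 2 * (g + 2) * A := by
    have t1 : g * (N + Ul) ≤ g * (ε * W) := mul_le_mul_of_nonneg_left h1 hg.le
    have t4 : ε * (g + C₁) * W ≤ g / 2 * W := mul_le_mul_of_nonneg_right hε2 hW0
    have e : g * W = g * (N + Ul) + g * Ue + g * Sneg + g * A := by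
      rw [hWeq, hpart]; ring
    linarith only [t1, hUe2, hSneg, h2, t4, hA0, e]
  -- conclude
  have f1 : ε⁻¹ * (N + Ul) ≤ W := by
    rw [inv_mul_le_iff₀ hε]; exact h1
  have f2 : g * Ue ≤ C₁ * W + A := by
    have hCε : C₁ * ε * W ≤ C₁ * W :=
      mul_le_mul_of_nonneg_right (mul_le_of_le_one_right hC₁0.le hε1) hW0
    linarith only [hUe2, h2, hCε]
  rw [habs, div_mul_eq_mul_div, le_div_iff₀ (by positivity : (0:ℝ) < g ^ 2)]
  have q1 : g ^ 2 * (ε⁻¹ * (N + Ul)) ≤ g ^ 2 * W :=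
    mul_le_mul_of_nonneg_left f1 (by positivity)
  have q2 : g * (g * Ue) ≤ g * (C₁ * W + A) := mul_le_mul_of_nonneg_left f2 hg.le
  have q3 : (g + C₁) * (g * W) ≤ (g + C₁) * (2 * (g + 2) * A) :=
    mul_le_mul_of_nonneg_left hgW (by positivity)
  linarith only [q1, q2, q3, hA0, mul_nonneg hg.le hA0]


/-- Dominance of the stable mode: if the neutral part and the generic unstable part
of `h` are `ε`-small and the entropy-type quadratic form on the essential part is
almost nonpositive, then the stable part controls everything. The constants depend
only on `C₁`, `λ_top = λ_0` and the spectral gap `g`. -/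
theorem dominance_of_stable_mode (C₁ Λ g : ℝ) (hC₁ : 1 ≤ C₁) (hg : 0 < g) :
    ∃ ε₀ C : ℝ, 0 < ε₀ ∧ 0 < C ∧
      ∀ (H : Type) [NormedAddCommGroup H] [InnerProductSpace ℝ H] [CompleteSpace H],
      ∀ (Y : HilbertBasis ℕ ℝ H) (lam : ℕ → ℝ),
        Antitone lam → Tendsto lam atTop atBot →
        lam 0 = Λ →
        (∀ i : ℕ, lam i ≠ 0 → g ≤ |lam i|) →
        ∀ Sess : Set ℕ,
        ∀ ε : ℝ, 0 < ε → ε ≤ ε₀ →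
        ∀ h : H, HWfin Y lam h →
          ‖proj Y {i | lam i = 0} h‖ ^ 2 +
              ‖proj Y {i | i ∈ Sessᶜ ∧ 0 < lam i} h‖ ^ 2 ≤
            ε * HWsq Y lam h →
          quadL Y lam Sess h ≤ C₁ * ε * HWsq Y lam h →
          ε⁻¹ * (‖proj Y {i | lam i = 0} h‖ ^ 2 +
              ‖proj Y {i | i ∈ Sessᶜ ∧ 0 < lam i} h‖ ^ 2) +
            ‖proj Y {i | i ∈ Sess ∧ 0 < lam i} h‖ ^ 2 ≤
            C * |quadL Y lam {i | lam i < 0} h| := by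
  have hC₁0 : (0 : ℝ) < C₁ := lt_of_lt_of_le one_pos hC₁
  refine ⟨g / (2 * (g + C₁)), (2 * (g + 2) * (g + C₁) + g) / g ^ 2,
    by positivity, by positivity, ?_⟩
  intro H _ _ _ Y lam hanti _htend hlam0 hgap Sess ε hε hεε₀ h hfin h1 h2
  have hΛ : ∀ i, lam i ≤ Λ := fun i => le_of_le_of_eq (hanti (Nat.zero_le i)) hlam0
  simp only [HWsq, quadL] at h1 h2 ⊢
  rw [norm_proj_sq, norm_proj_sq] at h1
  rw [norm_proj_sq, norm_proj_sq, norm_proj_sq]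
  exact key_ineq C₁ Λ g hC₁ hg lam (fun i => (inner ℝ h (Y i) : ℝ) ^ 2)
    (fun i => sq_nonneg _) hΛ hgap Sess ε hε hεε₀ hfin h1 h2

end
end
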